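/- arXiv:math/0510217 — 10 statements merged into one kernel-verified Lean document; each statement's English description precedes it below -/
import Mathlib

section
/- Let p be a prime. If two integer polynomials f(x) = a_{p-1}x^{p-1} + ··· + a_0 and g(x) = b_{p-1}x^{p-1} + ··· + b_0, of degree at most p-1, satisfy f(x) ≡ g(x) (mod p^d) for every integer x, then a_i ≡ b_i (mod p^d) for all i = 0, ..., p-1. -/
open Polynomial in
lemma comp_X_add_one_coeff (h : Polynomial ℤ) {n : ℕ} (hn : h.natDegree < n) (k : ℕ) :
    (h.comp (X + 1)).coeff k = ∑ e ∈ Finset.range n, h.coeff e * (e.choose k : ℤ) := by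
  have hs := h.sum_over_range' (f := fun e a => (C a * (X + 1) ^ e).coeff k)
    (fun m => by simp) n hn
  rw [comp_eq_sum_left, coeff_sum, hs]
  simp [coeff_C_mul, coeff_X_add_one_pow]

open Polynomial in
lemma key (p d : ℕ) (hp : p.Prime) :
    ∀ n, n < p → ∀ h : Polynomial ℤ, h.natDegree ≤ n →
      (∀ x : ℤ, (p : ℤ) ^ d ∣ h.eval x) → ∀ i, (p : ℤ) ^ d ∣ h.coeff i := by
  intro n
  induction n with
  | zero =>
    intro _ h hdeg hev i
    rcases Nat.eq_zero_or_pos i with rfl | hi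
    · rw [Polynomial.coeff_zero_eq_eval_zero]; exact hev 0
    · rw [h.coeff_eq_zero_of_natDegree_lt (lt_of_le_of_lt hdeg hi)]
      exact dvd_zero _
  | succ n ih =>
    intro hnp h hdeg hev i
    have hnp' : n < p := Nat.lt_of_succ_lt hnp
    set Δ : Polynomial ℤ := h.comp (X + 1) - h with hΔ
    have hdeg' : h.natDegree < n + 2 := Nat.lt_succ_of_le hdeg
    have hcoe : ∀ k, Δ.coeff k =
        (∑ e ∈ Finset.range (n + 2), h.coeff e * (e.choose k : ℤ)) - h.coeff k := by
      intro k
      rw [hΔ, coeff_sub, comp_X_add_one_coeff h hdeg' k]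
    -- coefficients of Δ beyond n vanish
    have hzero : ∀ k, n < k → Δ.coeff k = 0 := by
      intro k hk
      rw [hcoe]
      rcases eq_or_lt_of_le (Nat.succ_le_of_lt hk) with hkn | hkn
      · -- k = n + 1
        rw [Finset.sum_range_succ]
        have : ∀ e ∈ Finset.range (n + 1), h.coeff e * (e.choose k : ℤ) = 0 := by
          intro e he
          simp only [Finset.mem_range] at he
          rw [Nat.choose_eq_zero_of_lt (by omega : e < k)]
          ring
        rw [Finset.sum_eq_zero this]
        simp [← hkn]
      · -- k > n + 1
        have : ∀ e ∈ Finset.range (n + 2), h.coeff e * (e.choose k : ℤ) = 0 := by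
          intro e he
          simp only [Finset.mem_range] at he
          rw [Nat.choose_eq_zero_of_lt (by omega : e < k)]
          ring
        rw [Finset.sum_eq_zero this]
        rw [h.coeff_eq_zero_of_natDegree_lt (by omega)]
        ring
    have hΔdeg : Δ.natDegree ≤ n := natDegree_le_iff_coeff_eq_zero.2 hzero
    have hΔev : ∀ x : ℤ, (p : ℤ) ^ d ∣ Δ.eval x := by
      intro x
      have : Δ.eval x = h.eval (x + 1) - h.eval x := by
        simp [hΔ]
      rw [this]
      exact dvd_sub (hev _) (hev _)
    -- Δ.coeff n = (n+1) * h.coeff (n+1)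
    have hcn : Δ.coeff n = (n + 1 : ℤ) * h.coeff (n + 1) := by
      rw [hcoe, Finset.sum_range_succ]
      have : ∀ e ∈ Finset.range (n + 1), h.coeff e * (e.choose n : ℤ) =
          if e = n then h.coeff n else 0 := by
        intro e he
        simp only [Finset.mem_range] at he
        split
        · simp [*]
        · rw [Nat.choose_eq_zero_of_lt (by omega)]; ring
      rw [Finset.sum_congr rfl this, Finset.sum_ite_eq' _ n]
      simp [Nat.choose_succ_self_right]
      ring
    have hdvd_mul : (p : ℤ) ^ d ∣ (n + 1 : ℤ) * h.coeff (n + 1) := by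
      rw [← hcn]; exact ih hnp' Δ hΔdeg hΔev n
    -- coprimality
    have hcop : IsCoprime ((n + 1 : ℕ) : ℤ) ((p : ℤ) ^ d) := by
      apply IsCoprime.pow_right
      rw [Int.isCoprime_iff_gcd_eq_one]
      have hnd : ¬ (p ∣ n + 1) := Nat.not_dvd_of_pos_of_lt (Nat.succ_pos n) hnp
      rw [Int.gcd_natCast_natCast]
      exact Nat.Coprime.symm ((Nat.Prime.coprime_iff_not_dvd hp).2 hnd)
    have ha : (p : ℤ) ^ d ∣ h.coeff (n + 1) :=
      hcop.symm.dvd_of_dvd_mul_right (by rw [mul_comm] at hdvd_mul; exact_mod_cast hdvd_mul)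
    -- subtract the top term
    set h' : Polynomial ℤ := h - C (h.coeff (n + 1)) * X ^ (n + 1) with hh'
    have hh'c : ∀ k, h'.coeff k = h.coeff k - if k = n + 1 then h.coeff (n + 1) else 0 := by
      intro k
      simp [hh', coeff_C_mul, coeff_X_pow]
    have hh'deg : h'.natDegree ≤ n := by
      apply natDegree_le_iff_coeff_eq_zero.2
      intro k hk
      rw [hh'c]
      rcases eq_or_lt_of_le (Nat.succ_le_of_lt hk) with hkn | hkn
      · simp [← hkn]
      · rw [h.coeff_eq_zero_of_natDegree_lt (by omega), if_neg (by omega)]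
        ring
    have hh'ev : ∀ x : ℤ, (p : ℤ) ^ d ∣ h'.eval x := by
      intro x
      have : h'.eval x = h.eval x - h.coeff (n + 1) * x ^ (n + 1) := by simp [hh']
      rw [this]
      exact dvd_sub (hev x) (ha.mul_right _)
    have hi' := ih hnp' h' hh'deg hh'ev i
    have : h.coeff i = h'.coeff i + if i = n + 1 then h.coeff (n + 1) else 0 := by
      rw [hh'c]; ring
    rw [this]
    exact dvd_add hi' (by split <;> simp [ha])

open Polynomial in
theorem stmt_2 (p d : ℕ) (hp : p.Prime) (hd : 1 ≤ d) (f g : Polynomial ℤ)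
    (hf : f.natDegree ≤ p - 1) (hg : g.natDegree ≤ p - 1)
    (h : ∀ x : ℤ, (p : ℤ) ^ d ∣ f.eval x - g.eval x) :
    ∀ i : ℕ, (p : ℤ) ^ d ∣ f.coeff i - g.coeff i := by
  have hp2 := hp.two_le
  intro i
  have hdeg : (f - g).natDegree ≤ p - 1 :=
    (natDegree_sub_le f g).trans (max_le hf hg)
  have := key p d hp (p - 1) (by omega) (f - g) hdeg (fun x => by simpa using h x) i
  simpa using this
end

section
/- Let p be a prime and F_p(x) = x(x-1)···(x-(p-1)). Then for every integer x, F_p(x)/p is an integer and F_p(x)/p ≡ -⌊x/p⌋ (mod p). -/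
open Finset

lemma prod_erase_zero_zmod (p : ℕ) [NeZero p] (hp : p.Prime) :
    ∏ a ∈ (Finset.univ : Finset (ZMod p)).erase 0, a = -1 := by
  haveI := Fact.mk hp
  have key : ∏ i ∈ Finset.Ico 1 p, ((i : ZMod p)) =
      ∏ a ∈ (Finset.univ : Finset (ZMod p)).erase 0, a := by
    refine Finset.prod_bij (fun i _ => (i : ZMod p)) ?_ ?_ ?_ ?_
    · intro i hi
      simp only [Finset.mem_Ico] at hi
      simp only [Finset.mem_erase, Finset.mem_univ, and_true]
      intro h
      have h1 := ZMod.val_cast_of_lt (n := p) hi.2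
      rw [h, ZMod.val_zero] at h1
      omega
    · intro i hi j hj hij
      simp only [Finset.mem_Ico] at hi hj
      have h1 := ZMod.val_cast_of_lt (n := p) hi.2
      have h2 := ZMod.val_cast_of_lt (n := p) hj.2
      rw [← h1, ← h2]
      exact congrArg ZMod.val hij
    · intro a ha
      simp only [Finset.mem_erase, Finset.mem_univ, and_true] at ha
      refine ⟨a.val, ?_, ?_⟩
      · simp only [Finset.mem_Ico]
        refine ⟨?_, ZMod.val_lt a⟩
        have : a.val ≠ 0 := fun h => ha ((ZMod.val_eq_zero a).mp h)
        omega
      · simp [ZMod.natCast_val, ZMod.cast_id]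
    · intro i hi; rfl
  rw [← key, ZMod.prod_Ico_one_prime]

theorem stmt_5 (p : ℕ) (hp : p.Prime) (x : ℤ) :
    (p : ℤ) ∣ (∏ i ∈ Finset.range p, (x - i)) ∧
      (p : ℤ) ∣ ((∏ i ∈ Finset.range p, (x - i)) / p - (-(Int.fdiv x p))) := by
  haveI := Fact.mk hp
  haveI : NeZero p := ⟨hp.ne_zero⟩
  have hppos : 0 < (p : ℤ) := by exact_mod_cast hp.pos
  set q := x.fdiv p with hq
  have hfd : x.fdiv p = x / p := Int.fdiv_eq_ediv_of_nonneg x (le_of_lt hppos)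
  set r : ℕ := (x % p).toNat with hrdef
  have hrnn : 0 ≤ x % p := Int.emod_nonneg x (ne_of_gt hppos)
  have hrlt : x % p < p := Int.emod_lt_of_pos x hppos
  have hrp : r < p := by omega
  have hxr : x - (r : ℤ) = p * q := by
    have h1 : (r : ℤ) = x % p := Int.toNat_of_nonneg hrnn
    rw [h1, hq, hfd]
    have := Int.emod_add_mul_ediv x p
    linarith
  have hrmem : r ∈ Finset.range p := Finset.mem_range.mpr hrp
  set P : ℤ := ∏ i ∈ (Finset.range p).erase r, (x - i) with hP
  have hprod : (∏ i ∈ Finset.range p, (x - i)) = (p * q) * P := by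
    rw [← Finset.mul_prod_erase (Finset.range p) (fun i => x - (i:ℤ)) hrmem, hxr]
  have hdvd1 : (p : ℤ) ∣ (∏ i ∈ Finset.range p, (x - i)) := by
    rw [hprod]; exact ⟨q * P, by ring⟩
  refine ⟨hdvd1, ?_⟩
  have hdiv : (∏ i ∈ Finset.range p, (x - i)) / p = q * P := by
    rw [hprod, mul_assoc, Int.mul_ediv_cancel_left _ (ne_of_gt hppos)]
  rw [hdiv]
  have hx_cast : ((x : ZMod p)) = (r : ZMod p) := by
    have h0 : ((x - r : ℤ) : ZMod p) = 0 := by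
      rw [hxr]; push_cast; simp
    push_cast at h0
    linear_combination h0
  have hPcast : (P : ZMod p) = -1 := by
    rw [hP]
    push_cast
    rw [← prod_erase_zero_zmod p hp]
    refine Finset.prod_bij (fun i _ => (x : ZMod p) - (i : ℕ)) ?_ ?_ ?_ ?_
    · intro i hi
      simp only [Finset.mem_erase, Finset.mem_range] at hi
      simp only [Finset.mem_erase, Finset.mem_univ, and_true]
      rw [hx_cast, sub_ne_zero]
      intro h
      have h1 := ZMod.val_cast_of_lt (n := p) hrp
      have h2 := ZMod.val_cast_of_lt (n := p) hi.2
      exact hi.1 (by rw [← h2, ← h, h1])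
    · intro i hi j hj hij
      simp only [Finset.mem_erase, Finset.mem_range] at hi hj
      have hcast : ((i : ℕ) : ZMod p) = ((j : ℕ) : ZMod p) := by
        have hij' : (x : ZMod p) - (i:ℕ) = (x : ZMod p) - (j:ℕ) := hij
        linear_combination -hij'
      have h1 := ZMod.val_cast_of_lt (n := p) hi.2
      have h2 := ZMod.val_cast_of_lt (n := p) hj.2
      rw [← h1, ← h2, hcast]
    · intro a ha
      simp only [Finset.mem_erase, Finset.mem_univ, and_true] at ha
      refine ⟨((x : ZMod p) - a).val, ?_, ?_⟩
      · simp only [Finset.mem_erase, Finset.mem_range]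
        refine ⟨?_, ZMod.val_lt _⟩
        intro h
        apply ha
        have h2 := congrArg (Nat.cast : ℕ → ZMod p) h
        rw [ZMod.natCast_val, ZMod.cast_id] at h2
        rw [hx_cast] at h2
        linear_combination -h2
      · show (x : ZMod p) - ((((x : ZMod p) - a).val : ℕ) : ZMod p) = a
        rw [ZMod.natCast_val, ZMod.cast_id]
        ring
    · intro i hi; rfl
  have hzero : ((q * P - -q : ℤ) : ZMod p) = 0 := by
    push_cast
    rw [hPcast]; ring
  exact (ZMod.intCast_zmod_eq_zero_iff_dvd _ p).mp hzero
end

section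
/- Let p be a prime, i any integer, and j ∈ {0, ..., p-1}. Then F_p(ip + j) ≡ -ip (mod p^2), where F_p(x) = x(x-1)···(x-(p-1)). -/
/-!
The factor with `k = j` is `i * p`, so `F_p(i p + j) + i p = i p * (Q + 1)` where `Q` is the
product of the remaining factors. Modulo `p`, `Q` is `∏_{k ≠ j} (j - k)`, the product of all
nonzero residues, which is `-1` by Wilson's theorem; hence `p ∣ Q + 1` and `p² ∣ i p * (Q + 1)`.
-/

open Finset

theorem FiniteField.prod_erase_zero_eq_neg_one (K : Type*) [Field K] [Fintype K] [DecidableEq K] :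
    ∏ a ∈ univ.erase (0 : K), a = -1 := by
  have h := congrArg Units.val (FiniteField.prod_univ_units_id_eq_neg_one (K := K))
  rw [Units.coe_prod, Units.val_neg, Units.val_one] at h
  rw [← h]
  exact (prod_nbij' Units.val (fun a => if h : a = 0 then 1 else Units.mk0 a h)
    (by simp) (by simp) (by simp) (by simp +contextual) (by simp)).symm

theorem FiniteField.prod_erase_sub_eq_neg_one {K : Type*} [Field K] [Fintype K] [DecidableEq K]
    (b : K) : ∏ a ∈ univ.erase b, (b - a) = -1 := by
  rw [← FiniteField.prod_erase_zero_eq_neg_one K]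
  exact prod_nbij' (b - ·) (b - ·) (by simp [sub_eq_zero, eq_comm]) (by simp) (by simp) (by simp)
    (by simp)

theorem ZMod.prod_range_erase_sub_eq_neg_one {p : ℕ} [Fact p.Prime] {n : ℕ} (hn : n < p) :
    ∏ k ∈ (range p).erase n, ((n : ZMod p) - k) = -1 := by
  rw [← FiniteField.prod_erase_sub_eq_neg_one (n : ZMod p)]
  refine prod_nbij' (↑) ZMod.val ?_ ?_ ?_ ?_ (by simp)
  · intro k hk
    rw [mem_erase, mem_range] at hk
    rw [mem_erase, Ne, ZMod.natCast_eq_natCast_iff', Nat.mod_eq_of_lt hk.2, Nat.mod_eq_of_lt hn]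
    exact ⟨hk.1, mem_univ _⟩
  · intro a ha
    rw [mem_erase, mem_range]
    refine ⟨fun h => (mem_erase.mp ha).1 ?_, ZMod.val_lt a⟩
    rw [← h, ZMod.natCast_zmod_val]
  · intro k hk
    exact ZMod.val_cast_of_lt (mem_range.mp (mem_of_mem_erase hk))
  · intro a _
    exact ZMod.natCast_zmod_val a

theorem stmt_6 (p : ℕ) (hp : p.Prime) (i : ℤ) (j : ℤ) (hj0 : 0 ≤ j) (hjp : j < p) :
    (p : ℤ) ^ 2 ∣ ((∏ k ∈ Finset.range p, (i * p + j - k)) - (-(i * p))) := by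
  have : Fact p.Prime := ⟨hp⟩
  lift j to ℕ using hj0
  have hj : j < p := by exact_mod_cast hjp
  rw [← mul_prod_erase _ _ (mem_range.mpr hj), add_sub_cancel_right, sub_neg_eq_add,
    ← mul_add_one (i * p)]
  have hQ : (p : ℤ) ∣ ∏ k ∈ (range p).erase j, (i * p + j - k) + 1 := by
    rw [← ZMod.intCast_zmod_eq_zero_iff_dvd]
    push_cast
    simp only [ZMod.natCast_self, mul_zero, zero_add, ZMod.prod_range_erase_sub_eq_neg_one hj,
      neg_add_cancel]
  rw [sq]
  exact mul_dvd_mul (dvd_mul_left _ _) hQ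
end

section
/- Let p be a prime and d ≥ 1. If f(x) is a monic null polynomial modulo p^d, then f(x)·(x^p - x) is a monic null polynomial modulo p^{d+1}. Consequently ω_1(p^{d+1}) ≤ ω_1(p^d) + p, where ω_1 denotes the least degree of a monic null polynomial. -/
open Polynomial

lemma aux_fermat (p : ℕ) (hp : p.Prime) (x : ℤ) : (p : ℤ) ∣ x ^ p - x := by
  have := Fact.mk hp
  have : ((x ^ p - x : ℤ) : ZMod p) = 0 := by
    push_cast
    rw [ZMod.pow_card]
    ring
  exact (ZMod.intCast_zmod_eq_zero_iff_dvd _ _).mp this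

lemma aux_monic (p : ℕ) (hp : p.Prime) : ((X : Polynomial ℤ) ^ p - X).Monic := by
  apply (monic_X_pow p).sub_of_left
  rw [degree_X, degree_X_pow]
  exact_mod_cast hp.one_lt

lemma aux_deg (p : ℕ) (hp : p.Prime) : ((X : Polynomial ℤ) ^ p - X).natDegree = p := by
  rw [natDegree_sub_eq_left_of_natDegree_lt, natDegree_X_pow]
  rw [natDegree_X, natDegree_X_pow]
  exact hp.one_lt

open Polynomial in
theorem stmt_9 (p d : ℕ) (hp : p.Prime) (hd : 1 ≤ d) :
    (∀ f : Polynomial ℤ, f.Monic → (∀ x : ℤ, (p : ℤ) ^ d ∣ f.eval x) →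
      ((f * ((X : Polynomial ℤ) ^ p - X)).Monic ∧
        ∀ x : ℤ, (p : ℤ) ^ (d + 1) ∣ (f * ((X : Polynomial ℤ) ^ p - X)).eval x)) ∧
    sInf {n : ℕ | ∃ f : Polynomial ℤ, f.Monic ∧ f.natDegree = n ∧
        ∀ x : ℤ, (p : ℤ) ^ (d + 1) ∣ f.eval x} ≤
      sInf {n : ℕ | ∃ f : Polynomial ℤ, f.Monic ∧ f.natDegree = n ∧
        ∀ x : ℤ, (p : ℤ) ^ d ∣ f.eval x} + p := by
  have key : ∀ f : Polynomial ℤ, f.Monic → (∀ x : ℤ, (p : ℤ) ^ d ∣ f.eval x) →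
      ((f * ((X : Polynomial ℤ) ^ p - X)).Monic ∧
        ∀ x : ℤ, (p : ℤ) ^ (d + 1) ∣ (f * ((X : Polynomial ℤ) ^ p - X)).eval x) := by
    intro f hf hdvd
    refine ⟨hf.mul (aux_monic p hp), fun x => ?_⟩
    rw [eval_mul, pow_succ]
    apply mul_dvd_mul (hdvd x)
    simpa using aux_fermat p hp x
  refine ⟨key, ?_⟩
  -- the set for exponent d is nonempty
  have hne : {n : ℕ | ∃ f : Polynomial ℤ, f.Monic ∧ f.natDegree = n ∧
      ∀ x : ℤ, (p : ℤ) ^ d ∣ f.eval x}.Nonempty := by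
    refine ⟨d * p, ((X : Polynomial ℤ) ^ p - X) ^ d, (aux_monic p hp).pow d, ?_, fun x => ?_⟩
    · rw [natDegree_pow, aux_deg p hp]
    · simp only [eval_pow, eval_sub, eval_X]
      exact pow_dvd_pow_of_dvd (aux_fermat p hp x) d
  obtain ⟨f, hf, hdeg, hdvd⟩ := Nat.sInf_mem hne
  obtain ⟨hm, hd2⟩ := key f hf hdvd
  apply Nat.sInf_le
  refine ⟨f * ((X : Polynomial ℤ) ^ p - X), hm, ?_, hd2⟩
  rw [hf.natDegree_mul (aux_monic p hp), hdeg, aux_deg p hp]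
end

section
/- Let p be a prime. The polynomial G_{p,2}(x) = ∏_{i=0}^{p-1}(F_p(x) - i p), where F_p(x) = x(x-1)···(x-(p-1)), is a null polynomial modulo p^{p+1}; that is, for every integer x, G_{p,2}(x) ≡ 0 (mod p^{p+1}). -/
lemma aux_dvd_prod (p : ℕ) (hp : p.Prime) (m : ℤ) :
    (p : ℤ) ∣ ∏ k ∈ Finset.range p, (m - k) := by
  haveI : Fact p.Prime := ⟨hp⟩
  haveI : NeZero p := ⟨hp.ne_zero⟩
  rw [← ZMod.intCast_zmod_eq_zero_iff_dvd]
  push_cast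
  apply Finset.prod_eq_zero (i := (m : ZMod p).val)
  · exact Finset.mem_range.mpr (ZMod.val_lt _)
  · rw [ZMod.natCast_val, ZMod.cast_id, sub_self]

theorem stmt_10 (p : ℕ) (hp : p.Prime) (x : ℤ) :
    (p : ℤ) ^ (p + 1) ∣ ∏ i ∈ Finset.range p, ((∏ k ∈ Finset.range p, (x - k)) - i * p) := by
  obtain ⟨m, hm⟩ := aux_dvd_prod p hp x
  have h : ∏ i ∈ Finset.range p, ((∏ k ∈ Finset.range p, (x - k)) - i * p)
      = (p : ℤ) ^ p * ∏ i ∈ Finset.range p, (m - i) := by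
    have : ∀ i ∈ Finset.range p, (∏ k ∈ Finset.range p, (x - k)) - i * p
        = (p : ℤ) * (m - i) := by
      intro i _
      rw [hm]; ring
    rw [Finset.prod_congr rfl this, Finset.prod_mul_distrib, Finset.prod_const,
      Finset.card_range]
  rw [h, pow_succ]
  exact mul_dvd_mul dvd_rfl (aux_dvd_prod p hp m)
end

section
/- Let p be a prime. Then for all integers i and all j ∈ {0, ..., p^2 - 1}, the values (1/p^{p+1})·∏_{k=0}^{p-1}(F_p(ip^2+j) - kp), as i runs over a complete residue system modulo p, form a complete residue system modulo p. -/
/-!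
Modulo `p` the falling factorial `F_p(x) = x(x-1)⋯(x-p+1)` is `x^p - x`, so `F_p' ≡ -1 (mod p)`
and Taylor expansion gives `F_p(x + c) ≡ F_p(x) - c (mod p c)` whenever `p ∣ c`. With
`Q = F_p / p` one has `G_{p,2}(x) = p^(p+1) Q(Q(x))`. Shifting `x` by `p²` shifts `Q(x)` by `-p`
modulo `p²`, which in turn shifts `Q(Q(x))` by `1` modulo `p`; hence
`G_{p,2}(i p² + j) / p^(p+1) ≡ G_{p,2}(j) / p^(p+1) + i (mod p)`.
-/

open Finset Polynomial

namespace Polynomial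

variable {p : ℕ} [Fact p.Prime]

theorem descPochhammer_zmod_eq_X_pow_sub_X : descPochhammer (ZMod p) p = X ^ p - X := by
  have hmonic : (X ^ p - X : (ZMod p)[X]).Monic :=
    monic_X_pow_sub (by simpa using (Fact.out : p.Prime).one_lt)
  have hdeg : (descPochhammer (ZMod p) p).degree = p := by
    rw [degree_eq_natDegree (monic_descPochhammer _ _).ne_zero, descPochhammer_natDegree]
  refine eq_of_degree_sub_lt_of_eval_finset_eq univ ?_ fun a _ => ?_
  · rw [card_univ, ZMod.card, ← hdeg]
    refine degree_sub_lt_left ?_ (monic_descPochhammer _ _).ne_zero ?_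
    · rw [hdeg, degree_sub_eq_left_of_degree_lt] <;> simp [(Fact.out : p.Prime).one_lt]
    · rw [(monic_descPochhammer _ _).leadingCoeff, hmonic.leadingCoeff]
  · rw [← ZMod.natCast_zmod_val a, descPochhammer_eval_coe_nat_of_lt (ZMod.val_lt a)]
    simp [ZMod.pow_card]

theorem prime_dvd_descPochhammer_eval (x : ℤ) : (p : ℤ) ∣ (descPochhammer ℤ p).eval x := by
  rw [← ZMod.intCast_zmod_eq_zero_iff_dvd, descPochhammer_eval_cast,
    descPochhammer_zmod_eq_X_pow_sub_X]
  simp [ZMod.pow_card]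

theorem derivative_descPochhammer_eval_modEq (x : ℤ) :
    (derivative (descPochhammer ℤ p)).eval x ≡ -1 [ZMOD p] := by
  have h := eval_intCast_map (Int.castRingHom (ZMod p)) (derivative (descPochhammer ℤ p)) x
  rw [← derivative_map, descPochhammer_map, descPochhammer_zmod_eq_X_pow_sub_X, Int.cast_id] at h
  rw [← ZMod.intCast_eq_intCast_iff, ← eq_intCast (Int.castRingHom _), ← h]
  simp [derivative_X_pow]

theorem descPochhammer_eval_add_modEq {c : ℤ} (hc : (p : ℤ) ∣ c) (x : ℤ) :
    (descPochhammer ℤ p).eval (x + c) ≡ (descPochhammer ℤ p).eval x - c [ZMOD p * c] := by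
  obtain ⟨k, hk⟩ := binomExpansion (descPochhammer ℤ p) x c
  have hderiv : (p : ℤ) * c ∣ ((derivative (descPochhammer ℤ p)).eval x + 1) * c :=
    mul_dvd_mul_right (by simpa using (derivative_descPochhammer_eval_modEq x).dvd.neg_right) c
  have hsq : (p : ℤ) * c ∣ k * c ^ 2 :=
    (mul_dvd_mul_right hc c).trans ⟨k, by ring⟩
  rw [hk, Int.modEq_iff_dvd]
  exact (hderiv.add hsq).neg_right.trans (dvd_of_eq (by ring))

end Polynomial

theorem Int.ModEq.polynomial_eval {n a b : ℤ} (P : ℤ[X]) (h : a ≡ b [ZMOD n]) :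
    P.eval a ≡ P.eval b [ZMOD n] :=
  Int.modEq_iff_dvd.mpr (h.dvd.trans (sub_dvd_eval_sub b a P))

/-- `F_p x / p`, where `F_p = descPochhammer ℤ p`. -/
noncomputable def descPochhammerQuot (p : ℕ) (x : ℤ) : ℤ := (descPochhammer ℤ p).eval x / p

namespace descPochhammerQuot

variable {p : ℕ} [Fact p.Prime]

theorem mul_eq_eval (x : ℤ) : p * descPochhammerQuot p x = (descPochhammer ℤ p).eval x :=
  Int.mul_ediv_cancel' (prime_dvd_descPochhammer_eval x)

theorem add_sq_modEq (x : ℤ) :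
    descPochhammerQuot p (x + p ^ 2) ≡ descPochhammerQuot p x - p [ZMOD p ^ 2] := by
  have h := descPochhammer_eval_add_modEq (dvd_pow_self (p : ℤ) two_ne_zero) x
  rw [← mul_eq_eval, ← mul_eq_eval,
    show p * descPochhammerQuot p x - p ^ 2 = p * (descPochhammerQuot p x - p) by ring] at h
  exact Int.ModEq.mul_left_cancel' (Nat.cast_ne_zero.mpr (Fact.out : p.Prime).ne_zero) h

theorem twice_add_sq_modEq (x : ℤ) :
    descPochhammerQuot p (descPochhammerQuot p (x + p ^ 2)) ≡
      descPochhammerQuot p (descPochhammerQuot p x) + 1 [ZMOD p] := by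
  set y := descPochhammerQuot p x
  have hshift : (descPochhammer ℤ p).eval (y - p) ≡ (descPochhammer ℤ p).eval y + p
      [ZMOD p ^ 2] := by
    simpa [← sub_eq_add_neg, Int.modEq_neg, ← sq] using
      descPochhammer_eval_add_modEq (dvd_neg.mpr (dvd_refl (p : ℤ))) y
  have h := ((add_sq_modEq x).polynomial_eval (descPochhammer ℤ p)).trans hshift
  rw [← mul_eq_eval, ← mul_eq_eval, show p * descPochhammerQuot p y + p =
    p * (descPochhammerQuot p y + 1) by ring] at h
  exact Int.ModEq.mul_left_cancel' (Nat.cast_ne_zero.mpr (Fact.out : p.Prime).ne_zero)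
    (by simpa only [sq] using h)

theorem twice_add_mul_sq_modEq (i x : ℤ) :
    descPochhammerQuot p (descPochhammerQuot p (i * p ^ 2 + x)) ≡
      descPochhammerQuot p (descPochhammerQuot p x) + i [ZMOD p] := by
  induction i using Int.induction_on with
  | zero => simp [Int.ModEq.refl]
  | succ i ih =>
    rw [show ((i : ℤ) + 1) * p ^ 2 + x = i * p ^ 2 + x + p ^ 2 by ring, ← add_assoc]
    exact (twice_add_sq_modEq _).trans (ih.add_right 1)
  | pred i ih =>
    rw [show -(i : ℤ) * p ^ 2 + x = (-i - 1) * p ^ 2 + x + p ^ 2 by ring] at ih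
    refine Int.ModEq.add_right_cancel' 1 ?_
    calc _ ≡ descPochhammerQuot p (descPochhammerQuot p x) + -i [ZMOD p] :=
          (twice_add_sq_modEq _).symm.trans ih
      _ = _ := by ring

theorem prod_eval_sub_mul_eq (x : ℤ) :
    ∏ k ∈ range p, ((descPochhammer ℤ p).eval x - k * p) =
      p ^ (p + 1) * descPochhammerQuot p (descPochhammerQuot p x) := by
  have hfactor : ∀ k ∈ range p, (descPochhammer ℤ p).eval x - k * p =
      p * (descPochhammerQuot p x - k) := fun k _ => by
    rw [← mul_eq_eval]
    ring
  rw [prod_congr rfl hfactor, prod_mul_distrib, prod_const, card_range,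
    ← descPochhammer_eval_eq_prod_range, ← mul_eq_eval, pow_succ, mul_assoc]

end descPochhammerQuot

open descPochhammerQuot in
theorem stmt_11_general (p : ℕ) (hp : p.Prime) (j : ℤ) :
    ∀ i₁ i₂ : ℤ,
      ((p : ℤ) ∣ ((∏ k ∈ Finset.range p,
            ((∏ l ∈ Finset.range p, (i₁ * p ^ 2 + j - l)) - k * p)) / (p : ℤ) ^ (p + 1) -
          (∏ k ∈ Finset.range p,
            ((∏ l ∈ Finset.range p, (i₂ * p ^ 2 + j - l)) - k * p)) / (p : ℤ) ^ (p + 1))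
        ↔ (p : ℤ) ∣ (i₁ - i₂)) := by
  have : Fact p.Prime := ⟨hp⟩
  have hpow : (p : ℤ) ^ (p + 1) ≠ 0 := pow_ne_zero _ (Nat.cast_ne_zero.mpr hp.ne_zero)
  intro i₁ i₂
  simp only [← descPochhammer_eval_eq_prod_range, prod_eval_sub_mul_eq,
    Int.mul_ediv_cancel_left _ hpow]
  have h₁ := twice_add_mul_sq_modEq (p := p) i₁ j
  have h₂ := twice_add_mul_sq_modEq (p := p) i₂ j
  rw [← Int.modEq_iff_dvd, ← Int.modEq_iff_dvd]
  exact ⟨fun h => Int.ModEq.add_left_cancel' _ (h₂.symm.trans (h.trans h₁)),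
    fun h => h₂.trans ((h.add_left _).trans h₁.symm)⟩

theorem stmt_11 (p : ℕ) (hp : p.Prime) (j : ℤ) (hj0 : 0 ≤ j) (hjp : j < (p : ℤ) ^ 2) :
    ∀ i₁ i₂ : ℤ,
      ((p : ℤ) ∣ ((∏ k ∈ Finset.range p,
            ((∏ l ∈ Finset.range p, (i₁ * p ^ 2 + j - l)) - k * p)) / (p : ℤ) ^ (p + 1) -
          (∏ k ∈ Finset.range p,
            ((∏ l ∈ Finset.range p, (i₂ * p ^ 2 + j - l)) - k * p)) / (p : ℤ) ^ (p + 1))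
        ↔ (p : ℤ) ∣ (i₁ - i₂)) :=
  stmt_11_general p hp j
end

section
/- Let p be a prime. For all integers i and j ∈ {0, ..., p-1}, G_{p,2}(ip^2 + j)/p^{p+1} ≡ i (mod p), where G_{p,2}(x) = ∏_{k=0}^{p-1}(F_p(x) - kp) and F_p(x) = x(x-1)···(x-(p-1)). -/
/-!
Write `x = i p² + j`. In `F_p(x) = ∏_{l<p} (x - l)` the factor `l = j` is `i p²`, and the others
are `≡ j - l (mod p)`; by Wilson's theorem in the form `∏_{z ≠ c} (c - z) = -1` over `𝔽_p`, their
product `A` is `≡ -1`. So `F_p(x) = p y` with `y = i p A`, and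
`G_{p,2}(x) = p^p ∏_{k<p} (y - k) = p^{p+1} · i A · B` with `B = ∏_{0<k<p} (y - k)`. As `y ≡ 0`,
Wilson's theorem again gives `B ≡ -1`, so the quotient `i A B` is `≡ i (mod p)`.
-/

open Finset

theorem FiniteField.prod_univ_erase_zero_eq_neg_one {K : Type*} [Field K] [Fintype K]
    [DecidableEq K] : ∏ x ∈ univ.erase (0 : K), x = -1 := by
  rw [← Units.val_one, ← Units.val_neg, ← FiniteField.prod_univ_units_id_eq_neg_one,
    Units.coe_prod]
  symm
  exact prod_nbij Units.val (by simp) Units.val_injective.injOn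
    (fun x hx => ⟨Units.mk0 x (ne_of_mem_erase hx), by simp, rfl⟩) fun _ _ => rfl

theorem FiniteField.prod_univ_erase_sub_eq_neg_one {K : Type*} [Field K] [Fintype K]
    [DecidableEq K] (c : K) : ∏ x ∈ univ.erase c, (c - x) = -1 := by
  rw [← FiniteField.prod_univ_erase_zero_eq_neg_one]
  exact prod_equiv (Equiv.subLeft c) (by simp [sub_eq_zero, eq_comm]) fun _ _ => rfl

theorem ZMod.prod_range_erase_natCast {M : Type*} [CommMonoid M] {p n : ℕ} [NeZero p]
    (hn : n < p) (f : ZMod p → M) :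
    ∏ l ∈ (range p).erase n, f l = ∏ x ∈ univ.erase (n : ZMod p), f x := by
  refine prod_nbij' Nat.cast ZMod.val ?_ ?_ ?_ ?_ fun _ _ => rfl
  · intro l hl
    simp only [mem_erase, mem_range, mem_univ, and_true] at hl ⊢
    rw [Ne, ZMod.natCast_eq_natCast_iff', Nat.mod_eq_of_lt hl.2, Nat.mod_eq_of_lt hn]
    exact hl.1
  · intro x hx
    simp only [mem_erase, mem_range, mem_univ, and_true] at hx ⊢
    exact ⟨fun h => hx (h ▸ (ZMod.natCast_zmod_val x).symm), ZMod.val_lt x⟩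
  · intro l hl
    exact ZMod.val_cast_of_lt (mem_range.1 (mem_of_mem_erase hl))
  · intro x _
    exact ZMod.natCast_zmod_val x

theorem ZMod.intCast_prod_range_erase_sub_eq_neg_one {p n : ℕ} [Fact p.Prime] (hn : n < p)
    {a : ℤ} (ha : (a : ZMod p) = n) :
    ((∏ l ∈ (range p).erase n, (a - l) : ℤ) : ZMod p) = -1 := by
  push_cast [ha]
  rw [ZMod.prod_range_erase_natCast hn (fun x => (n : ZMod p) - x)]
  exact FiniteField.prod_univ_erase_sub_eq_neg_one _

theorem stmt_12 (p : ℕ) (hp : p.Prime) (i : ℤ) (j : ℤ) (hj0 : 0 ≤ j) (hjp : j < (p : ℤ)) :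
    (p : ℤ) ∣ ((∏ k ∈ Finset.range p,
        ((∏ l ∈ Finset.range p, (i * p ^ 2 + j - l)) - k * p)) / (p : ℤ) ^ (p + 1) - i) := by
  have : Fact p.Prime := ⟨hp⟩
  lift j to ℕ using hj0 with n
  have hn : n < p := by exact_mod_cast hjp
  set A := ∏ l ∈ (range p).erase n, (i * p ^ 2 + n - l : ℤ)
  set y := i * p * A
  set B := ∏ k ∈ (range p).erase 0, (y - k)
  have hF : ∏ l ∈ range p, (i * p ^ 2 + n - l : ℤ) = p * y := by
    rw [← mul_prod_erase _ _ (mem_range.2 hn)]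
    ring
  have hG : ∏ k ∈ range p, ((p : ℤ) * y - k * p) = p ^ (p + 1) * (i * A * B) := by
    rw [prod_congr rfl fun (k : ℕ) _ => show (p : ℤ) * y - k * p = p * (y - k) by ring,
      prod_mul_distrib, prod_const, card_range, ← mul_prod_erase _ _ (mem_range.2 hp.pos)]
    ring
  rw [hF, hG, Int.mul_ediv_cancel_left _ (pow_ne_zero _ (mod_cast hp.ne_zero)),
    ← ZMod.intCast_zmod_eq_zero_iff_dvd]
  have hA : (A : ZMod p) = -1 := ZMod.intCast_prod_range_erase_sub_eq_neg_one hn (by simp)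
  have hB : (B : ZMod p) = -1 := ZMod.intCast_prod_range_erase_sub_eq_neg_one hp.pos (by simp [y])
  push_cast [hA, hB]
  ring
end

section
/- Let p be a prime and define I_p(n) = (p^n - 1)/(p - 1) for n ≥ 1 and the rational polynomials G̃_{p,0}(x) = x and G̃_{p,n}(x) = (1/p)·∏_{i=0}^{p-1}(G̃_{p,n-1}(x) - i). Then p^{I_p(n)}·G̃_{p,n}(x) is an integer polynomial with integer values, and it is a null polynomial modulo p^{I_p(n)}: for every integer x, G̃_{p,n}(x) is an integer. -/
/-!
Both parts go by induction on `n`. If `G̃_{p,n}(x)` is an integer `a`, then one of the `p`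
consecutive integers `a, a - 1, …, a - p + 1` (the one with `i = a % p`) is divisible by `p`, so
`G̃_{p,n+1}(x)` is an integer. For the coefficients, `I_p(n+1) = p·I_p(n) + 1`: one factor `p`
cancels the `1/p` and the remaining `p^{I_p(n)}` go one to each factor, so
`p^{I_p(n+1)} G̃_{p,n+1} = ∏ᵢ (p^{I_p(n)} G̃_{p,n} - p^{I_p(n)} i)`, a product of integer polynomials.
-/

open Polynomial

noncomputable def Gt (p : ℕ) : ℕ → Polynomial ℚ
  | 0 => X
  | n + 1 => C (1 / (p : ℚ)) * ∏ i ∈ Finset.range p, (Gt p n - C (i : ℚ))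

def Ip (p n : ℕ) : ℕ := ∑ i ∈ Finset.range n, p ^ i

lemma Ip_succ (p n : ℕ) : Ip p (n + 1) = Ip p n * p + 1 := by
  simp only [Ip, Finset.sum_range_succ', pow_succ, pow_zero, ← Finset.sum_mul]

lemma Int.natCast_dvd_prod_range_sub (a : ℤ) {p : ℕ} (hp : p ≠ 0) :
    (p : ℤ) ∣ ∏ i ∈ Finset.range p, (a - i) := by
  have hp' : (0 : ℤ) < p := by exact_mod_cast Nat.pos_of_ne_zero hp
  have hmem : (a % p).toNat ∈ Finset.range p := by
    rw [Finset.mem_range]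
    have := Int.emod_lt_of_pos a hp'
    omega
  refine dvd_trans ?_ (Finset.dvd_prod_of_mem _ hmem)
  rw [Int.toNat_of_nonneg (Int.emod_nonneg a hp'.ne')]
  exact Int.dvd_self_sub_of_emod_eq rfl

lemma Gt_eval_intCast {p : ℕ} (hp : p ≠ 0) (n : ℕ) (x : ℤ) :
    ∃ a : ℤ, (Gt p n).eval (x : ℚ) = a := by
  induction n with
  | zero => exact ⟨x, by simp [Gt]⟩
  | succ n ih =>
    obtain ⟨a, ha⟩ := ih
    obtain ⟨b, hb⟩ := Int.natCast_dvd_prod_range_sub a hp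
    refine ⟨b, ?_⟩
    have hb' : ∏ i ∈ Finset.range p, ((a : ℚ) - i) = p * b := by exact_mod_cast hb
    have hp0 : (p : ℚ) ≠ 0 := Nat.cast_ne_zero.mpr hp
    simp only [Gt, eval_mul, eval_C, eval_prod, eval_sub, ha, hb']
    field_simp

lemma C_pow_Ip_mul_Gt_succ {p : ℕ} (hp : p ≠ 0) (n : ℕ) :
    C ((p : ℚ) ^ Ip p (n + 1)) * Gt p (n + 1) =
      ∏ i ∈ Finset.range p, (C ((p : ℚ) ^ Ip p n) * Gt p n - C ((p : ℚ) ^ Ip p n * i)) := by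
  have hp0 : (p : ℚ) ≠ 0 := Nat.cast_ne_zero.mpr hp
  simp_rw [C_mul, ← mul_sub]
  rw [Finset.prod_mul_distrib, Finset.prod_const, Finset.card_range, Gt, ← mul_assoc, ← C_pow,
    ← C_mul, Ip_succ]
  congr 2
  field_simp
  rw [← pow_mul, pow_succ']

lemma C_pow_Ip_mul_Gt_mem_lifts {p : ℕ} (hp : p ≠ 0) (n : ℕ) :
    C ((p : ℚ) ^ Ip p n) * Gt p n ∈ lifts (Int.castRingHom ℚ) := by
  induction n with
  | zero => simpa [Gt, Ip] using X_mem_lifts (Int.castRingHom ℚ)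
  | succ n ih =>
    rw [C_pow_Ip_mul_Gt_succ hp, lifts_iff_liftsRing]
    refine prod_mem fun i _ => sub_mem ((lifts_iff_liftsRing _ _).mp ih) ?_
    simpa using (lifts_iff_liftsRing _ _).mp
      (C_mem_lifts (Int.castRingHom ℚ) ((p : ℤ) ^ Ip p n * i))

theorem stmt_13_general (p : ℕ) (hp : p.Prime) (n : ℕ) :
    (∀ k : ℕ, ∃ a : ℤ, (p : ℚ) ^ (Ip p n) * (Gt p n).coeff k = (a : ℚ)) ∧
      (∀ x : ℤ, ∃ a : ℤ, (Gt p n).eval (x : ℚ) = (a : ℚ)) := by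
  refine ⟨fun k => ?_, Gt_eval_intCast hp.ne_zero n⟩
  obtain ⟨a, ha⟩ := (lifts_iff_coeff_lifts _).mp (C_pow_Ip_mul_Gt_mem_lifts hp.ne_zero n) k
  rw [coeff_C_mul] at ha
  exact ⟨a, ha.symm⟩

theorem stmt_13 (p : ℕ) (hp : p.Prime) (n : ℕ) (hn : 1 ≤ n) :
    (∀ k : ℕ, ∃ a : ℤ, (p : ℚ) ^ (Ip p n) * (Gt p n).coeff k = (a : ℚ)) ∧
      (∀ x : ℤ, ∃ a : ℤ, (Gt p n).eval (x : ℚ) = (a : ℚ)) :=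
  stmt_13_general p hp n
end

section
/- Let m ≥ 2 and μ(m) = min{k ≥ 1 : m | k!}. If f(x) is a monic integer polynomial of degree n such that f(x) ≡ 0 (mod m) for every integer x, then n ≥ μ(m). Hence ∏_{i=0}^{μ(m)-1}(x - i) is a least-degree monic null polynomial modulo m. -/
open Polynomial

noncomputable def mu (m : ℕ) : ℕ := sInf {k : ℕ | 1 ≤ k ∧ m ∣ k.factorial}

private lemma coeff_comp_X_add_one (f : Polynomial ℤ) (j : ℕ) :
    (f.comp (X + 1)).coeff j = ∑ k ∈ Finset.range (f.natDegree + 1),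
      f.coeff k * (k.choose j : ℤ) := by
  rw [comp, eval₂_eq_sum_range, finset_sum_coeff]
  refine Finset.sum_congr rfl fun k _ => ?_
  rw [coeff_C_mul, coeff_X_add_one_pow]

private lemma key_s17 (m : ℕ) : ∀ n : ℕ, ∀ f : Polynomial ℤ, f.natDegree = n →
    (∀ x : ℤ, (m : ℤ) ∣ f.eval x) → (m : ℤ) ∣ (n.factorial : ℤ) * f.leadingCoeff := by
  intro n
  induction n with
  | zero =>
    intro f hdeg hdvd
    have hf : f = C (f.coeff 0) := f.eq_C_of_natDegree_eq_zero hdeg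
    have h0 := hdvd 0
    rw [hf] at h0
    rw [hf, Nat.factorial_zero, Nat.cast_one, one_mul, leadingCoeff_C]
    simpa using h0
  | succ n ih =>
    intro f hdeg hdvd
    set g : Polynomial ℤ := f.comp (X + 1) - f with hg
    have hXone : (X + 1 : Polynomial ℤ).natDegree = 1 := by
      simpa using natDegree_X_add_C (1 : ℤ)
    have hcompdeg : (f.comp (X + 1)).natDegree = n + 1 := by
      rw [natDegree_comp, hXone, mul_one, hdeg]
    have hfne : f ≠ 0 := by
      intro h
      rw [h] at hdeg; simp at hdeg
    have hlc : f.leadingCoeff ≠ 0 := leadingCoeff_ne_zero.mpr hfne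
    -- coefficient n+1 of g is zero
    have hcoefftop : g.coeff (n + 1) = 0 := by
      have h1 : (f.comp (X + 1)).coeff (n + 1) = f.coeff (n + 1) := by
        rw [coeff_comp_X_add_one, hdeg]
        rw [Finset.sum_range_succ]
        have : ∀ k ∈ Finset.range (n + 1), f.coeff k * (k.choose (n + 1) : ℤ) = 0 := by
          intro k hk
          rw [Finset.mem_range] at hk
          rw [Nat.choose_eq_zero_of_lt hk]
          simp
        rw [Finset.sum_eq_zero this]
        simp
      simp [hg, h1]
    -- g has natDegree ≤ n
    have hgdegle : g.natDegree ≤ n := by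
      refine natDegree_le_iff_coeff_eq_zero.mpr fun j hj => ?_
      rcases eq_or_lt_of_le (Nat.succ_le_of_lt hj) with h | h
      · rw [← h]; exact hcoefftop
      · have h1 : (f.comp (X + 1)).coeff j = 0 :=
          coeff_eq_zero_of_natDegree_lt (by omega)
        have h2 : f.coeff j = 0 := coeff_eq_zero_of_natDegree_lt (by omega)
        simp [hg, h1, h2]
    -- coefficient n of g
    have hcoeffn : g.coeff n = (n + 1 : ℤ) * f.leadingCoeff := by
      have h1 : (f.comp (X + 1)).coeff n = f.coeff n + (n + 1 : ℤ) * f.coeff (n + 1) := by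
        rw [coeff_comp_X_add_one, hdeg]
        rw [Finset.sum_range_succ, Finset.sum_range_succ]
        have : ∀ k ∈ Finset.range n, f.coeff k * (k.choose n : ℤ) = 0 := by
          intro k hk
          rw [Finset.mem_range] at hk
          rw [Nat.choose_eq_zero_of_lt hk]
          simp
        rw [Finset.sum_eq_zero this]
        rw [Nat.choose_self, Nat.choose_succ_self_right]
        push_cast
        ring
      have h2 : f.leadingCoeff = f.coeff (n + 1) := by rw [leadingCoeff, hdeg]
      simp [hg, h1, h2]
    have hcn : g.coeff n ≠ 0 := by
      rw [hcoeffn]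
      exact mul_ne_zero (by positivity) hlc
    have hgdeg : g.natDegree = n :=
      le_antisymm hgdegle (le_natDegree_of_ne_zero hcn)
    have hglc : g.leadingCoeff = (n + 1 : ℤ) * f.leadingCoeff := by
      rw [leadingCoeff, hgdeg, hcoeffn]
    have hgnull : ∀ x : ℤ, (m : ℤ) ∣ g.eval x := by
      intro x
      have : g.eval x = f.eval (x + 1) - f.eval x := by
        simp [hg, eval_comp]
      rw [this]
      exact dvd_sub (hdvd (x + 1)) (hdvd x)
    have := ih g hgdeg hgnull
    rw [hglc] at this
    calc (m : ℤ) ∣ (n.factorial : ℤ) * ((n + 1 : ℤ) * f.leadingCoeff) := this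
      _ = ((n + 1).factorial : ℤ) * f.leadingCoeff := by
          rw [Nat.factorial_succ]; push_cast; ring

private lemma prod_eq_descPochhammer (k : ℕ) :
    (∏ i ∈ Finset.range k, ((X : Polynomial ℤ) - C (i : ℤ))) = descPochhammer ℤ k := by
  induction k with
  | zero => simp [descPochhammer_zero]
  | succ n ih =>
    rw [Finset.prod_range_succ, ih, descPochhammer_succ_right]
    simp [map_natCast]

theorem stmt_17 (m : ℕ) (hm : 2 ≤ m) :
    (∀ f : Polynomial ℤ, f.Monic → (∀ x : ℤ, (m : ℤ) ∣ f.eval x) → mu m ≤ f.natDegree) ∧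
      ((∏ i ∈ Finset.range (mu m), ((X : Polynomial ℤ) - C (i : ℤ))).Monic ∧
        (∏ i ∈ Finset.range (mu m), ((X : Polynomial ℤ) - C (i : ℤ))).natDegree = mu m ∧
        ∀ x : ℤ, (m : ℤ) ∣ (∏ i ∈ Finset.range (mu m), ((X : Polynomial ℤ) - C (i : ℤ))).eval x) := by
  have hne : {k : ℕ | 1 ≤ k ∧ m ∣ k.factorial}.Nonempty :=
    ⟨m, by omega, Nat.dvd_factorial (by omega) le_rfl⟩
  have hmem : 1 ≤ mu m ∧ m ∣ (mu m).factorial := Nat.sInf_mem hne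
  refine ⟨?_, ?_, ?_, ?_⟩
  · intro f hmonic hdvd
    have h := key_s17 m f.natDegree f rfl hdvd
    rw [hmonic.leadingCoeff, mul_one] at h
    have hd : m ∣ f.natDegree.factorial := by exact_mod_cast h
    have h1 : 1 ≤ f.natDegree := by
      by_contra hcon
      have h0 : f.natDegree = 0 := by omega
      have hf1 : f = 1 := hmonic.natDegree_eq_zero.mp h0
      have h2 := hdvd 0
      rw [hf1, eval_one] at h2
      have := Int.le_of_dvd one_pos h2
      omega
    exact Nat.sInf_le ⟨h1, hd⟩
  · exact monic_prod_of_monic _ _ fun i _ => monic_X_sub_C _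
  · rw [natDegree_prod_of_monic _ _ fun i _ => monic_X_sub_C _]
    have hd1 : ∀ i : ℕ, ((X : Polynomial ℤ) - (i : Polynomial ℤ)).natDegree = 1 := fun i => by
      rw [← map_natCast (C : ℤ →+* Polynomial ℤ) i]
      exact natDegree_X_sub_C _
    simp [hd1]
  · intro x
    rw [prod_eq_descPochhammer]
    have h1 : ((mu m).factorial : ℤ) ∣ (descPochhammer ℤ (mu m)).eval x := by
      rw [eval_eq_smeval, Ring.descPochhammer_eq_factorial_smul_choose]
      rw [nsmul_eq_mul]
      exact Dvd.intro _ rfl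
    exact dvd_trans (Int.natCast_dvd_natCast.mpr hmem.2) h1
end

section
/- Let p be a prime. Then G_{p,2}(x)/p^{p+1}, viewed as a function of x modulo p, is periodic with period p^3: for all integers i and all j ∈ {0, ..., p^3 - 1}, G_{p,2}(ip^3 + j)/p^{p+1} ≡ G_{p,2}(j)/p^{p+1} (mod p). -/
theorem stmt_19 (p : ℕ) (hp : p.Prime) (i : ℤ) (j : ℤ) (hj0 : 0 ≤ j) (hjp : j < (p : ℤ) ^ 3) :
    (p : ℤ) ∣ ((∏ k ∈ Finset.range p,
        ((∏ l ∈ Finset.range p, (i * p ^ 3 + j - l)) - k * p)) / (p : ℤ) ^ (p + 1) -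
      (∏ k ∈ Finset.range p,
        ((∏ l ∈ Finset.range p, (j - l)) - k * p)) / (p : ℤ) ^ (p + 1)) := by
  have hppos : (0:ℤ) < (p:ℤ) := by exact_mod_cast hp.pos
  have hp0 : (p:ℤ) ≠ 0 := ne_of_gt hppos
  -- key lemma: p divides any product of the form ∏_{k<p} (s - k)
  have key : ∀ s : ℤ, (p:ℤ) ∣ ∏ k ∈ Finset.range p, (s - (k:ℤ)) := by
    intro s
    have h0 : 0 ≤ s % p := Int.emod_nonneg s hp0
    have hlt : s % p < p := Int.emod_lt_of_pos s hppos
    have hmem : (s % (p:ℤ)).toNat ∈ Finset.range p := by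
      rw [Finset.mem_range]; omega
    refine dvd_trans ?_ (Finset.dvd_prod_of_mem _ hmem)
    have hcast : (((s % (p:ℤ)).toNat : ℤ)) = s % p := Int.toNat_of_nonneg h0
    rw [hcast]
    exact ⟨s / p, by have := Int.mul_ediv_add_emod s p; linarith⟩
  -- congruence of products mod a power of p
  have cong : ∀ (m : ℕ) (a b : ℤ), ((p:ℤ)^m ∣ a - b) →
      (p:ℤ)^m ∣ (∏ l ∈ Finset.range p, (a - (l:ℤ))) - ∏ l ∈ Finset.range p, (b - (l:ℤ)) := by
    intro m a b hab
    have hcast : ((p:ℤ)^m) = ((p^m : ℕ) : ℤ) := by push_cast; ring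
    rw [hcast] at hab ⊢
    rw [← ZMod.intCast_zmod_eq_zero_iff_dvd] at hab ⊢
    push_cast at hab ⊢
    have hab' : (a : ZMod (p^m)) = (b : ZMod (p^m)) := by linear_combination hab
    rw [hab']
    ring
  -- decompose F(j) = p * s
  obtain ⟨s, hs⟩ := key j
  -- F(x) ≡ F(j) mod p^3 where x = i*p^3 + j
  have h3 : (p:ℤ)^3 ∣ (∏ l ∈ Finset.range p, (i * p ^ 3 + j - (l:ℤ)))
      - ∏ l ∈ Finset.range p, (j - (l:ℤ)) := cong 3 _ _ ⟨i, by ring⟩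
  obtain ⟨t, ht⟩ := h3
  have hFx : (∏ l ∈ Finset.range p, (i * p ^ 3 + j - (l:ℤ)))
      = (p:ℤ) * (s + (p:ℤ)^2 * t) := by rw [hs] at ht; linarith [ht]
  -- rewrite both big products as p^p * (smaller product)
  have hGx : (∏ k ∈ Finset.range p,
        ((∏ l ∈ Finset.range p, (i * (p:ℤ) ^ 3 + j - l)) - (k:ℤ) * p))
      = (p:ℤ)^p * ∏ k ∈ Finset.range p, ((s + (p:ℤ)^2 * t) - (k:ℤ)) := by
    simp only [hFx]
    rw [show (∏ k ∈ Finset.range p, ((p:ℤ) * (s + (p:ℤ)^2 * t) - (k:ℤ) * p))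
        = ∏ k ∈ Finset.range p, ((p:ℤ) * ((s + (p:ℤ)^2 * t) - (k:ℤ))) from
      Finset.prod_congr rfl (fun k _ => by ring)]
    rw [Finset.prod_mul_distrib, Finset.prod_const, Finset.card_range]
  have hGy : (∏ k ∈ Finset.range p,
        ((∏ l ∈ Finset.range p, (j - (l:ℤ))) - (k:ℤ) * p))
      = (p:ℤ)^p * ∏ k ∈ Finset.range p, (s - (k:ℤ)) := by
    simp only [hs]
    rw [show (∏ k ∈ Finset.range p, ((p:ℤ) * s - (k:ℤ) * p))
        = ∏ k ∈ Finset.range p, ((p:ℤ) * (s - (k:ℤ))) from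
      Finset.prod_congr rfl (fun k _ => by ring)]
    rw [Finset.prod_mul_distrib, Finset.prod_const, Finset.card_range]
  -- inner products are each divisible by p
  obtain ⟨A, hA⟩ := key (s + (p:ℤ)^2 * t)
  obtain ⟨B, hB⟩ := key s
  -- inner products are congruent mod p^2
  have h2 : (p:ℤ)^2 ∣ (∏ k ∈ Finset.range p, ((s + (p:ℤ)^2 * t) - (k:ℤ)))
      - ∏ k ∈ Finset.range p, (s - (k:ℤ)) := cong 2 _ _ ⟨t, by ring⟩
  have hAB : (p:ℤ) ∣ A - B := by
    rw [hA, hB] at h2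
    have : (p:ℤ) * ((p:ℤ) * (A - B)) = (p:ℤ)^2 * ((A-B)) := by ring
    obtain ⟨c, hc⟩ := h2
    refine ⟨c, ?_⟩
    have h' : (p:ℤ) * (A - B) = (p:ℤ) * ((p:ℤ) * c) := by
      have : (p:ℤ) * A - (p:ℤ) * B = (p:ℤ)^2 * c := hc
      linarith [this]
    exact mul_left_cancel₀ hp0 (by linarith [h'])
  -- compute the quotients
  have hpow0 : ((p:ℤ)^(p+1)) ≠ 0 := pow_ne_zero _ hp0
  have hq1 : (∏ k ∈ Finset.range p,
        ((∏ l ∈ Finset.range p, (i * (p:ℤ) ^ 3 + j - l)) - (k:ℤ) * p)) / (p:ℤ)^(p+1) = A := by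
    rw [hGx, hA, show (p:ℤ)^p * ((p:ℤ) * A) = (p:ℤ)^(p+1) * A by ring]
    exact Int.mul_ediv_cancel_left A hpow0
  have hq2 : (∏ k ∈ Finset.range p,
        ((∏ l ∈ Finset.range p, (j - (l:ℤ))) - (k:ℤ) * p)) / (p:ℤ)^(p+1) = B := by
    rw [hGy, hB, show (p:ℤ)^p * ((p:ℤ) * B) = (p:ℤ)^(p+1) * B by ring]
    exact Int.mul_ediv_cancel_left B hpow0
  rw [hq1, hq2]
  exact hAB
end
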